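/- Let E be an m×n real matrix of rank r with SVD-partition U = [U₁ U₂], V = [V₁ V₂], S, and let B be an m×p real matrix. Then the matrix [E B] (horizontal concatenation of E and B) has full row rank if and only if U₂ᵀ·B has full row rank. -/

import Mathlib

open Matrix

noncomputable section

/-- A real matrix has full column rank (FCR) iff its rank equals its number of columns. -/
def FCR {m n : Type*} [Fintype m] [Fintype n] (A : Matrix m n ℝ) : Prop :=
  A.rank = Fintype.card n

/-- A real matrix has full row rank (FRR) iff its rank equals its number of rows. -/
def FRR {m n : Type*} [Fintype m] [Fintype n] (A : Matrix m n ℝ) : Prop :=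
  A.rank = Fintype.card m

/-- `E` is an `m × n` real matrix of rank `r` with SVD-partition
`U = [U₁ U₂]`, `V = [V₁ V₂]`, `S`: the matrices `U = [U₁ U₂]` and `V = [V₁ V₂]` are
orthogonal, `S` is an `r × r` diagonal matrix with positive diagonal entries,
and `E = U₁ * S * V₁ᵀ`. -/
def IsSVDPartition {m n r : ℕ} (E : Matrix (Fin m) (Fin n) ℝ)
    (U₁ : Matrix (Fin m) (Fin r) ℝ) (U₂ : Matrix (Fin m) (Fin (m - r)) ℝ)
    (V₁ : Matrix (Fin n) (Fin r) ℝ) (V₂ : Matrix (Fin n) (Fin (n - r)) ℝ)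
    (S : Matrix (Fin r) (Fin r) ℝ) : Prop :=
  r ≤ m ∧ r ≤ n ∧
    (Matrix.fromCols U₁ U₂)ᵀ * Matrix.fromCols U₁ U₂ = 1 ∧
    (Matrix.fromCols V₁ V₂)ᵀ * Matrix.fromCols V₁ V₂ = 1 ∧
    (∃ d : Fin r → ℝ, (∀ i, 0 < d i) ∧ S = Matrix.diagonal d) ∧
    E = U₁ * S * V₁ᵀ ∧ E.rank = r

/-! A matrix has full row rank iff its left kernel is trivial. Since `S V₁ᵀ` has a right inverse,
`x [E B] = 0` iff `x U₁ = 0` and `x B = 0`; and as `U₁ U₁ᵀ + U₂ U₂ᵀ = 1`, the vectors killed by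
`U₁` are exactly the `y U₂ᵀ`, with `y = x U₂` uniquely determined. -/

lemma frr_iff_forall_vecMul_eq_zero {m n : Type*} [Fintype m] [Fintype n]
    (A : Matrix m n ℝ) : FRR A ↔ ∀ x : m → ℝ, x ᵥ* A = 0 → x = 0 := by
  rw [FRR, rank_eq_finrank_span_row, eq_comm]
  refine linearIndependent_iff_card_eq_finrank_span.symm.trans ?_
  rw [← vecMul_injective_iff, ← coe_vecMulLinear, injective_iff_map_eq_zero]
  rfl

namespace Matrix

variable {R : Type*} [CommRing R] {m k₁ k₂ : Type*} [Fintype m]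

lemma vecMul_fromCols_eq_zero_iff (A : Matrix m k₁ R) (B : Matrix m k₂ R) (x : m → R) :
    x ᵥ* fromCols A B = 0 ↔ x ᵥ* A = 0 ∧ x ᵥ* B = 0 := by
  rw [vecMul_fromCols, ← Sum.elim_zero_zero, Sum.elim_eq_iff]

lemma fromCols_transpose_mul_self_eq_one_iff [DecidableEq k₁] [DecidableEq k₂]
    (U₁ : Matrix m k₁ R) (U₂ : Matrix m k₂ R) :
    (fromCols U₁ U₂)ᵀ * fromCols U₁ U₂ = 1 ↔
      U₁ᵀ * U₁ = 1 ∧ U₁ᵀ * U₂ = 0 ∧ U₂ᵀ * U₁ = 0 ∧ U₂ᵀ * U₂ = 1 := by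
  rw [transpose_fromCols, fromRows_mul_fromCols, ← fromBlocks_one, fromBlocks_inj]

lemma mul_transpose_add_mul_transpose_eq_one [Fintype k₁] [Fintype k₂] [DecidableEq m]
    [DecidableEq k₁] [DecidableEq k₂] (e : m ≃ k₁ ⊕ k₂)
    {U₁ : Matrix m k₁ R} {U₂ : Matrix m k₂ R} (hU : (fromCols U₁ U₂)ᵀ * fromCols U₁ U₂ = 1) :
    U₁ * U₁ᵀ + U₂ * U₂ᵀ = 1 := by
  rw [← fromCols_mul_fromRows, fromCols_mul_fromRows_eq_one_comm e, ← transpose_fromCols, hU]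

lemma vecMul_mul_eq_zero_iff_of_mul_eq_one {n l : Type*} [Fintype n] [DecidableEq n]
    [Fintype l] {A : Matrix m n R} {C : Matrix n l R} {D : Matrix l n R} (hCD : C * D = 1)
    (x : m → R) :
    x ᵥ* (A * C) = 0 ↔ x ᵥ* A = 0 := by
  refine ⟨fun h => ?_, fun h => by rw [← vecMul_vecMul, h, zero_vecMul]⟩
  rw [← vecMul_one (x ᵥ* A), ← hCD, ← vecMul_vecMul, vecMul_vecMul x A C, h, zero_vecMul]

lemma forall_vecMul_eq_zero_iff_transpose_mul_of_orthogonal {p : Type*} [Fintype k₁]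
    [Fintype k₂] [DecidableEq m] [DecidableEq k₁] [DecidableEq k₂]
    (e : m ≃ k₁ ⊕ k₂) {U₁ : Matrix m k₁ R} {U₂ : Matrix m k₂ R}
    (hU : (fromCols U₁ U₂)ᵀ * fromCols U₁ U₂ = 1) (B : Matrix m p R) :
    (∀ x : m → R, x ᵥ* U₁ = 0 → x ᵥ* B = 0 → x = 0) ↔
      ∀ y : k₂ → R, y ᵥ* (U₂ᵀ * B) = 0 → y = 0 := by
  obtain ⟨-, -, hU₂₁, hU₂₂⟩ := (fromCols_transpose_mul_self_eq_one_iff U₁ U₂).mp hU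
  have hsplit : ∀ x : m → R, x ᵥ* U₁ = 0 → (x ᵥ* U₂) ᵥ* U₂ᵀ = x := fun x hx =>
    calc (x ᵥ* U₂) ᵥ* U₂ᵀ = x ᵥ* (U₁ * U₁ᵀ + U₂ * U₂ᵀ) := by
          rw [vecMul_add, ← vecMul_vecMul x U₁, hx, zero_vecMul, zero_add, vecMul_vecMul]
      _ = x := by rw [mul_transpose_add_mul_transpose_eq_one e hU, vecMul_one]
  constructor
  · intro h y hy
    have hx : y ᵥ* U₂ᵀ = 0 :=
      h _ (by rw [vecMul_vecMul, hU₂₁, vecMul_zero]) (by rwa [vecMul_vecMul])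
    rw [← vecMul_one y, ← hU₂₂, ← vecMul_vecMul, hx, zero_vecMul]
  · intro h x hx₁ hxB
    rw [← hsplit x hx₁, h (x ᵥ* U₂) (by rw [← vecMul_vecMul, hsplit x hx₁, hxB]), zero_vecMul]

end Matrix

/-- `[E  B]` has full row rank iff `U₂ᵀ·B` has full row rank. -/
theorem concat_frr_iff_transpose_mul_frr (m n r p : ℕ)
    (E : Matrix (Fin m) (Fin n) ℝ)
    (U₁ : Matrix (Fin m) (Fin r) ℝ) (U₂ : Matrix (Fin m) (Fin (m - r)) ℝ)
    (V₁ : Matrix (Fin n) (Fin r) ℝ) (V₂ : Matrix (Fin n) (Fin (n - r)) ℝ)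
    (S : Matrix (Fin r) (Fin r) ℝ)
    (hsvd : IsSVDPartition E U₁ U₂ V₁ V₂ S)
    (B : Matrix (Fin m) (Fin p) ℝ) :
    FRR (Matrix.fromCols E B) ↔ FRR (U₂ᵀ * B) := by
  obtain ⟨hrm, -, hU, hV, ⟨d, hd, rfl⟩, rfl, -⟩ := hsvd
  have hV₁ : V₁ᵀ * V₁ = 1 := ((fromCols_transpose_mul_self_eq_one_iff V₁ V₂).mp hV).1
  have hSV : diagonal d * V₁ᵀ * (V₁ * diagonal d⁻¹) = 1 := by
    rw [Matrix.mul_assoc, ← Matrix.mul_assoc V₁ᵀ, hV₁, Matrix.one_mul, diagonal_mul_diagonal,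
      ← diagonal_one]
    exact congrArg diagonal (funext fun i => mul_inv_cancel₀ (hd i).ne')
  have hE : ∀ x : Fin m → ℝ, x ᵥ* (U₁ * diagonal d * V₁ᵀ) = 0 ↔ x ᵥ* U₁ = 0 := fun x => by
    rw [Matrix.mul_assoc, vecMul_mul_eq_zero_iff_of_mul_eq_one hSV]
  let e : Fin m ≃ Fin r ⊕ Fin (m - r) :=
    (finCongr (by omega : m = r + (m - r))).trans finSumFinEquiv.symm
  rw [frr_iff_forall_vecMul_eq_zero, frr_iff_forall_vecMul_eq_zero,
    ← forall_vecMul_eq_zero_iff_transpose_mul_of_orthogonal e hU]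
  simp only [vecMul_fromCols_eq_zero_iff, hE, and_imp]
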